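/- (Bonnet–Myers type diameter bound) Assume #V ≥ 2 and let κ₀ > 0. If κ̄(x,y) ≥ κ₀ for all x, y ∈ V with x ≠ y, then diam(H) ≤ 2/κ₀. -/

import Mathlib

open scoped BigOperators

noncomputable section

namespace HypRicci

variable {V : Type*} [Fintype V] [DecidableEq V]

/-- A finite weighted hypergraph on vertex set `V`: a finite set of nonempty
hyperedges together with positive weights. -/
structure Hypergraph (V : Type*) [Fintype V] [DecidableEq V] : Type _ where
  E : Finset (Finset V)
  w : Finset V → ℝ
  w_pos : ∀ e ∈ E, 0 < w e
  e_nonempty : ∀ e ∈ E, e.Nonempty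

/-- Degree `d_x = ∑_{e ∋ x} w(e)`. -/
def deg (H : Hypergraph V) (x : V) : ℝ := ∑ e ∈ H.E, if x ∈ e then H.w e else 0

/-- Volume `vol(V) = ∑_x d_x`. -/
def vol (H : Hypergraph V) : ℝ := ∑ x, deg H x

/-- Weighted inner product `⟨f,g⟩ = ∑_x f(x) g(x) / d_x`. -/
def inn (H : Hypergraph V) (f g : V → ℝ) : ℝ := ∑ x, f x * g x / deg H x

/-- Norm associated to `inn`. -/
def nrm (H : Hypergraph V) (f : V → ℝ) : ℝ := Real.sqrt (inn H f f)

/-- Indicator function `δ_x`. -/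
def delta (x : V) : V → ℝ := fun z => if z = x then 1 else 0

/-- Standard (unweighted) dot product `u^⊤ v`. -/
def dot (u v : V → ℝ) : ℝ := ∑ x, u x * v x

/-- Base polytope `B_e = conv{δ_x − δ_y : x,y ∈ e}`. -/
def Bp (e : Finset V) : Set (V → ℝ) :=
  convexHull ℝ {b : V → ℝ | ∃ x ∈ e, ∃ y ∈ e, b = delta x - delta y}

/-- The multivalued hypergraph Laplacian
`L(f) = {∑_e w(e) (b_e^⊤ f) b_e : b_e ∈ argmax_{b ∈ B_e} b^⊤ f}`. -/
def Lap (H : Hypergraph V) (f : V → ℝ) : Set (V → ℝ) :=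
  { g | ∃ b : Finset V → (V → ℝ),
      (∀ e ∈ H.E, b e ∈ Bp e ∧ ∀ b' ∈ Bp e, dot b' f ≤ dot (b e) f) ∧
      g = ∑ e ∈ H.E, (H.w e * dot (b e) f) • b e }

/-- `D⁻¹ f`. -/
def Dinv (H : Hypergraph V) (f : V → ℝ) : V → ℝ := fun x => f x / deg H x

/-- Normalized Laplacian `𝓛(f) = L(D⁻¹ f)`. -/
def NL (H : Hypergraph V) (f : V → ℝ) : Set (V → ℝ) := Lap H (Dinv H f)

/-- The resolvent `J_λ = (I + λ𝓛)⁻¹`: it sends `f` to the (unique) `g` with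
`f ∈ g + λ 𝓛(g)`. -/
def Resolvent (H : Hypergraph V) (l : ℝ) (f : V → ℝ) : V → ℝ :=
  Classical.epsilon fun g => ∃ h ∈ NL H g, f = g + l • h

/-- Adjacency: `x ∼ y` iff some hyperedge contains both. -/
def Adj (H : Hypergraph V) (x y : V) : Prop := ∃ e ∈ H.E, x ∈ e ∧ y ∈ e

/-- There is a chain of length `n` of successively adjacent vertices from `x` to `y`. -/
def chainProp (H : Hypergraph V) (x y : V) (n : ℕ) : Prop :=
  ∃ z : ℕ → V, z 0 = x ∧ z n = y ∧ ∀ i < n, Adj H (z i) (z (i + 1))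

/-- Connectedness of the hypergraph. -/
def Connected (H : Hypergraph V) : Prop := ∀ x y : V, ∃ n, chainProp H x y n

/-- Graph distance (as a natural number). -/
def hdistN (H : Hypergraph V) (x y : V) : ℕ := sInf {n | chainProp H x y n}

/-- Graph distance `d(x,y)` as a real number. -/
def gdist (H : Hypergraph V) (x y : V) : ℝ := (hdistN H x y : ℝ)

/-- Diameter `diam(H) = max_{x,y} d(x,y)`. -/
def hdiam (H : Hypergraph V) : ℝ :=
  (((Finset.univ : Finset (V × V)).sup fun p => hdistN H p.1 p.2 : ℕ) : ℝ)

/-- Weighted `1`-Lipschitz functions: `⟨f, δ_x − δ_y⟩ ≤ d(x,y)` for all `x, y`. -/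
def Lip1 (H : Hypergraph V) : Set (V → ℝ) :=
  { f | ∀ x y : V, inn H f (delta x - delta y) ≤ gdist H x y }

/-- The `λ`-nonlinear Kantorovich difference. -/
def KD (H : Hypergraph V) (l : ℝ) (x y : V) : ℝ :=
  sSup { r | ∃ f ∈ Lip1 H, r = inn H (Resolvent H l f) (delta x - delta y) }

/-- `κ_λ(x,y) = 1 − KD_λ(x,y)/d(x,y)`. -/
def kappa (H : Hypergraph V) (l : ℝ) (x y : V) : ℝ := 1 - KD H l x y / gdist H x y

/-- Lower coarse Ricci curvature `κ̲(x,y) = liminf_{λ↓0} κ_λ(x,y)/λ`. -/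
def kappaLower (H : Hypergraph V) (x y : V) : EReal :=
  Filter.liminf (fun l : ℝ => ((kappa H l x y / l : ℝ) : EReal)) (nhdsWithin 0 (Set.Ioi 0))

/-- Upper coarse Ricci curvature `κ̄(x,y) = limsup_{λ↓0} κ_λ(x,y)/λ`. -/
def kappaUpper (H : Hypergraph V) (x y : V) : EReal :=
  Filter.limsup (fun l : ℝ => ((kappa H l x y / l : ℝ) : EReal)) (nhdsWithin 0 (Set.Ioi 0))

/-- Canonical restriction `𝓛⁰ f`: the unique element of minimal norm of `𝓛(f)`. -/
def L0 (H : Hypergraph V) (f : V → ℝ) : V → ℝ :=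
  Classical.epsilon fun g => g ∈ NL H f ∧ ∀ h ∈ NL H f, nrm H g ≤ nrm H h

/-- The stationary distribution `π(x) = d_x / vol(V)`. -/
def piH (H : Hypergraph V) : V → ℝ := fun x => deg H x / vol H

/-- The energy `Q(h) = (1/2) ∑_e w(e) max_{x,y ∈ e} (h(x) − h(y))²`. -/
def Qform (H : Hypergraph V) (h : V → ℝ) : ℝ :=
  (1 / 2) * ∑ e ∈ H.E, H.w e * sSup { r | ∃ x ∈ e, ∃ y ∈ e, r = (h x - h y) ^ 2 }

end HypRicci

/-!
The resolvent `J_λ f` is a minimiser of `g ↦ ½‖g - f‖² + λ Φ(g)` with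
`Φ(g) = ½ ∑_e w(e) osc_e(D⁻¹g)²`, whose subdifferential is `𝓛 g`: were `f - g` outside the
compact convex set `λ 𝓛(g)`, moving `g` along a separating direction would lower the energy.
For a weighted `1`-Lipschitz `f` the coefficients of `𝓛(J_λ f)` are then at most
`1/(1 - 2λ)`, so `J_λ` moves every `⟨f, δ_x - δ_y⟩` by at most `2λ/(1 - 2λ)`. Testing
`KD_λ(x,y)` on `f = -D d(x, ·)` gives `κ_λ(x,y) ≤ 2λ/((1 - 2λ) d(x,y))`, hence
`κ₀ ≤ κ̄(x,y) ≤ 2/d(x,y)`.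
-/

namespace HypRicci

open Finset Filter Topology Matrix
open scoped Pointwise

section Oscillation

variable {V : Type*} {e : Finset V}

-- The support function `ψ ↦ max_{b ∈ B_e} bᵀψ` of the base polytope (see `dot_le_osc`),
-- with junk value `0` for `e = ∅`.
def osc (e : Finset V) (ψ : V → ℝ) : ℝ :=
  if he : e.Nonempty then (e ×ˢ e).sup' (he.product he) fun q => ψ q.1 - ψ q.2 else 0

lemma sub_le_osc {x y : V} (hx : x ∈ e) (hy : y ∈ e) (ψ : V → ℝ) : ψ x - ψ y ≤ osc e ψ := by
  rw [osc, dif_pos ⟨x, hx⟩]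
  exact le_sup' (fun q : V × V => ψ q.1 - ψ q.2) (mem_product.2 ⟨hx, hy⟩ : (x, y) ∈ e ×ˢ e)

lemma osc_le (he : e.Nonempty) {ψ : V → ℝ} {c : ℝ} (h : ∀ x ∈ e, ∀ y ∈ e, ψ x - ψ y ≤ c) :
    osc e ψ ≤ c := by
  rw [osc, dif_pos he]
  exact sup'_le _ _ fun q hq => h _ (mem_product.1 hq).1 _ (mem_product.1 hq).2

lemma osc_nonneg (he : e.Nonempty) (ψ : V → ℝ) : 0 ≤ osc e ψ := by
  obtain ⟨x, hx⟩ := he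
  simpa using sub_le_osc hx hx ψ

lemma exists_sub_eq_osc (he : e.Nonempty) (ψ : V → ℝ) :
    ∃ x ∈ e, ∃ y ∈ e, ψ x - ψ y = osc e ψ := by
  obtain ⟨q, hq, hmax⟩ := (e ×ˢ e).exists_mem_eq_sup' (he.product he) fun q => ψ q.1 - ψ q.2
  exact ⟨q.1, (mem_product.1 hq).1, q.2, (mem_product.1 hq).2, by rw [osc, dif_pos he, hmax]⟩

@[fun_prop]
lemma continuous_osc (e : Finset V) : Continuous (osc e) := by
  show Continuous fun ψ => osc e ψ
  by_cases he : e.Nonempty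
  · simp only [osc, dif_pos he]
    exact Continuous.finset_sup'_apply _ fun q _ => by fun_prop
  · simp only [osc, dif_neg he]
    exact continuous_const

end Oscillation

section Indicators

variable {V : Type*}

lemma dot_eq_dotProduct [Fintype V] (u v : V → ℝ) : dot u v = u ⬝ᵥ v := rfl

lemma isLinearMap_dot [Fintype V] (ψ : V → ℝ) : IsLinearMap ℝ fun b : V → ℝ => dot b ψ :=
  ⟨fun a b => add_dotProduct a b ψ, fun c a => smul_dotProduct c a ψ⟩

variable [DecidableEq V] {e : Finset V}

lemma delta_eq_single (x : V) : delta x = Pi.single x 1 := by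
  ext z
  simp [delta, Pi.single_apply]

lemma delta_sub_delta_mem_Bp {x y : V} (hx : x ∈ e) (hy : y ∈ e) : delta x - delta y ∈ Bp e :=
  subset_convexHull ℝ _ ⟨x, hx, y, hy, rfl⟩

lemma apply_mem_of_mem_Bp {φ : (V → ℝ) → ℝ} (hφ : IsLinearMap ℝ φ) {s : Set ℝ}
    (hs : Convex ℝ s) (h : ∀ x ∈ e, ∀ y ∈ e, φ (delta x - delta y) ∈ s) {b : V → ℝ}
    (hb : b ∈ Bp e) : φ b ∈ s := by
  refine convexHull_min (𝕜 := ℝ) (t := φ ⁻¹' s) ?_ (hs.is_linear_preimage hφ) hb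
  rintro _ ⟨x, hx, y, hy, rfl⟩
  exact h x hx y hy

lemma abs_apply_le_one_of_mem_Bp {b : V → ℝ} (hb : b ∈ Bp e) (z : V) : |b z| ≤ 1 :=
  abs_le.2 <| apply_mem_of_mem_Bp (φ := fun b => b z) ⟨fun _ _ => rfl, fun _ _ => rfl⟩
    (convex_Icc (-1) 1)
    (fun x _ y _ => by simp only [Pi.sub_apply, delta]; split_ifs <;> norm_num) hb

lemma apply_eq_zero_of_mem_Bp {b : V → ℝ} (hb : b ∈ Bp e) {z : V} (hz : z ∉ e) : b z = 0 :=
  apply_mem_of_mem_Bp (φ := fun b => b z) ⟨fun _ _ => rfl, fun _ _ => rfl⟩ (convex_singleton 0)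
    (fun x hx y hy => by simp [delta, ne_of_mem_of_not_mem hx hz |>.symm,
      ne_of_mem_of_not_mem hy hz |>.symm]) hb

end Indicators

variable {V : Type*} [Fintype V] [DecidableEq V]

section Distance

variable {H : Hypergraph V}

lemma chainProp_refl (x : V) : chainProp H x x 0 :=
  ⟨fun _ => x, rfl, rfl, fun i hi => absurd hi (Nat.not_lt_zero i)⟩

lemma chainProp_one_of_mem {e : Finset V} (he : e ∈ H.E) {x y : V} (hx : x ∈ e) (hy : y ∈ e) :
    chainProp H x y 1 :=
  ⟨fun i => if i = 0 then x else y, rfl, rfl, fun i hi => by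
    obtain rfl : i = 0 := by omega
    exact ⟨e, he, hx, hy⟩⟩

lemma chainProp.trans {x y z : V} {m n : ℕ} (h₁ : chainProp H x y m) (h₂ : chainProp H y z n) :
    chainProp H x z (m + n) := by
  obtain ⟨c₁, hc₁0, hc₁m, hc₁⟩ := h₁
  obtain ⟨c₂, hc₂0, hc₂n, hc₂⟩ := h₂
  set c : ℕ → V := fun i => if i ≤ m then c₁ i else c₂ (i - m)
  have hc : ∀ i, m ≤ i → c i = c₂ (i - m) := by
    intro i hi
    rcases hi.eq_or_lt with rfl | hi
    · simp [c, hc₁m, hc₂0]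
    · simp [c, hi.not_ge]
  refine ⟨c, by simp [c, hc₁0], by rw [hc _ (by omega), Nat.add_sub_cancel_left, hc₂n],
    fun i hi => ?_⟩
  rcases lt_or_ge i m with him | him
  · simp only [c, if_pos him.le, if_pos (Nat.succ_le_of_lt him)]
    exact hc₁ i him
  · rw [hc i him, hc (i + 1) (by omega), Nat.sub_add_comm him]
    exact hc₂ _ (by omega)

lemma chainProp_hdistN (hconn : Connected H) (x y : V) : chainProp H x y (hdistN H x y) :=
  Nat.sInf_mem (hconn x y)

lemma gdist_self (x : V) : gdist H x x = 0 := by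
  have : hdistN H x x = 0 := Nat.sInf_eq_zero.2 (Or.inl (chainProp_refl x))
  simp [gdist, this]

lemma gdist_triangle (hconn : Connected H) (x y z : V) :
    gdist H x z ≤ gdist H x y + gdist H y z := by
  unfold gdist
  exact_mod_cast Nat.sInf_le ((chainProp_hdistN hconn x y).trans (chainProp_hdistN hconn y z))

lemma gdist_le_one_of_mem {e : Finset V} (he : e ∈ H.E) {x y : V} (hx : x ∈ e) (hy : y ∈ e) :
    gdist H x y ≤ 1 := by
  unfold gdist
  exact_mod_cast Nat.sInf_le (chainProp_one_of_mem he hx hy)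

lemma one_le_gdist (hconn : Connected H) {x y : V} (hxy : x ≠ y) : 1 ≤ gdist H x y := by
  unfold gdist
  refine Nat.one_le_cast.2 (Nat.pos_of_ne_zero fun h0 => hxy ?_)
  obtain ⟨c, hc0, hcn, -⟩ := chainProp_hdistN hconn x y
  rw [h0] at hcn
  exact hc0.symm.trans hcn

end Distance

section BasePolytope

variable {e : Finset V}

lemma dot_delta_sub_delta (x y : V) (ψ : V → ℝ) : dot (delta x - delta y) ψ = ψ x - ψ y := by
  simp [dot_eq_dotProduct, delta_eq_single, sub_dotProduct]

lemma inn_delta_sub_delta (H : Hypergraph V) (f : V → ℝ) (x y : V) :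
    inn H f (delta x - delta y) = Dinv H f x - Dinv H f y := by
  have : inn H f (delta x - delta y) = Dinv H f ⬝ᵥ (delta x - delta y) := by
    simp only [inn, Dinv, dotProduct, div_mul_eq_mul_div]
  rw [this]
  simp [delta_eq_single, dotProduct_sub]

lemma isCompact_Bp (e : Finset V) : IsCompact (Bp e) := by
  refine Set.Finite.isCompact_convexHull ℝ
    ((Set.finite_range fun q : V × V => delta q.1 - delta q.2).subset ?_)
  rintro _ ⟨x, -, y, -, rfl⟩
  exact ⟨(x, y), rfl⟩

lemma dot_le_osc {b : V → ℝ} (hb : b ∈ Bp e) (ψ : V → ℝ) : dot b ψ ≤ osc e ψ :=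
  apply_mem_of_mem_Bp (isLinearMap_dot ψ) (convex_Iic _)
    (fun x hx y hy => by simpa [dot_delta_sub_delta] using sub_le_osc hx hy ψ) hb

lemma dot_eq_osc_of_forall_le (he : e.Nonempty) {b ψ : V → ℝ} (hb : b ∈ Bp e)
    (hmax : ∀ b' ∈ Bp e, dot b' ψ ≤ dot b ψ) : dot b ψ = osc e ψ := by
  obtain ⟨x, hx, y, hy, hxy⟩ := exists_sub_eq_osc he ψ
  refine (dot_le_osc hb ψ).antisymm ?_
  rw [← hxy, ← dot_delta_sub_delta]
  exact hmax _ (delta_sub_delta_mem_Bp hx hy)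

end BasePolytope

section Laplacian

variable {H : Hypergraph V} {ψ : V → ℝ}

lemma mem_Lap_iff {g : V → ℝ} :
    g ∈ Lap H ψ ↔ ∃ b : Finset V → V → ℝ, (∀ e ∈ H.E, b e ∈ Bp e ∧ dot (b e) ψ = osc e ψ) ∧
      g = ∑ e ∈ H.E, (H.w e * osc e ψ) • b e := by
  constructor
  · rintro ⟨b, hb, rfl⟩
    have hosc : ∀ e ∈ H.E, dot (b e) ψ = osc e ψ := fun e he =>
      dot_eq_osc_of_forall_le (H.e_nonempty e he) (hb e he).1 (hb e he).2
    exact ⟨b, fun e he => ⟨(hb e he).1, hosc e he⟩, sum_congr rfl fun e he => by rw [hosc e he]⟩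
  · rintro ⟨b, hb, rfl⟩
    refine ⟨b, fun e he => ⟨(hb e he).1, fun b' hb' => ?_⟩, sum_congr rfl fun e he => ?_⟩
    · rw [(hb e he).2]
      exact dot_le_osc hb' ψ
    · rw [(hb e he).2]

lemma Lap_eq_image (H : Hypergraph V) (ψ : V → ℝ) :
    Lap H ψ = (fun b : Finset V → V → ℝ => ∑ e ∈ H.E, (H.w e * osc e ψ) • b e) ''
      Set.univ.pi fun e => if e ∈ H.E then {b ∈ Bp e | osc e ψ ≤ dot b ψ} else {0} := by
  ext g
  simp only [mem_Lap_iff, Set.mem_image, Set.mem_univ_pi]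
  constructor
  · rintro ⟨b, hb, rfl⟩
    refine ⟨fun e => if e ∈ H.E then b e else 0, fun e => ?_,
      sum_congr rfl fun e he => by simp only [if_pos he]⟩
    by_cases he : e ∈ H.E
    · simpa [he] using And.intro (hb e he).1 (hb e he).2.ge
    · simp [he]
  · rintro ⟨b, hb, rfl⟩
    refine ⟨b, fun e he => ?_, rfl⟩
    have hbe := hb e
    rw [if_pos he] at hbe
    exact ⟨hbe.1, (dot_le_osc hbe.1 ψ).antisymm hbe.2⟩

lemma isCompact_Lap (H : Hypergraph V) (ψ : V → ℝ) : IsCompact (Lap H ψ) := by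
  have hdot : Continuous fun b : V → ℝ => dot b ψ := by
    simp only [dot]
    fun_prop
  rw [Lap_eq_image]
  refine (isCompact_univ_pi fun e => ?_).image (by fun_prop)
  split_ifs
  · exact (isCompact_Bp e).inter_right (isClosed_le continuous_const hdot)
  · exact isCompact_singleton

lemma convex_Lap (H : Hypergraph V) (ψ : V → ℝ) : Convex ℝ (Lap H ψ) := by
  rw [Lap_eq_image]
  refine (convex_pi fun e _ => ?_).is_linear_image
    ⟨fun a b => by simp [sum_add_distrib], fun c a => by simp [smul_sum, smul_comm c]⟩
  split_ifs
  · exact (convex_convexHull ℝ _).inter (convex_halfSpace_ge (isLinearMap_dot ψ) _)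
  · exact convex_singleton 0

lemma abs_apply_le_of_mem_Lap {h : V → ℝ} (hh : h ∈ Lap H ψ) {C : ℝ}
    (hC : ∀ e ∈ H.E, osc e ψ ≤ C) (z : V) : |h z| ≤ C * deg H z := by
  obtain ⟨b, hb, rfl⟩ := mem_Lap_iff.1 hh
  rw [deg, mul_sum, Finset.sum_apply]
  refine (abs_sum_le_sum_abs _ _).trans (sum_le_sum fun e he => ?_)
  have hw := H.w_pos e he
  have hosc := osc_nonneg (H.e_nonempty e he) ψ
  rw [Pi.smul_apply, smul_eq_mul, abs_mul, abs_of_nonneg (mul_nonneg hw.le hosc)]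
  split_ifs with hz
  · have hb1 := abs_apply_le_one_of_mem_Bp (hb e he).1 z
    nlinarith [mul_le_mul_of_nonneg_left hb1 (mul_nonneg hw.le hosc),
      mul_le_mul_of_nonneg_left (hC e he) hw.le]
  · simp [apply_eq_zero_of_mem_Bp (hb e he).1 hz]

end Laplacian

section Optimality

lemma exists_mem_Bp_eventually_osc_sub_smul_le {e : Finset V} (he : e.Nonempty) (u v : V → ℝ) :
    ∃ b ∈ Bp e, dot b u = osc e u ∧
      ∀ᶠ t in 𝓝[>] (0 : ℝ), osc e (u - t • v) ≤ osc e u - t * dot b v := by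
  -- among the pairs realising `osc e u`, take one maximising `v y - v x`
  set P := (e ×ˢ e).filter fun q : V × V => u q.1 - u q.2 = osc e u
  obtain ⟨x, hx, y, hy, hxy⟩ := exists_sub_eq_osc he u
  obtain ⟨q, hqP, hq⟩ := P.exists_max_image (fun q => v q.2 - v q.1)
    ⟨(x, y), by simp [P, hx, hy, hxy]⟩
  obtain ⟨⟨hq₁, hq₂⟩, hqu⟩ : (q.1 ∈ e ∧ q.2 ∈ e) ∧ u q.1 - u q.2 = osc e u := by
    simpa [P] using hqP
  refine ⟨delta q.1 - delta q.2, delta_sub_delta_mem_Bp hq₁ hq₂,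
    by rw [dot_delta_sub_delta, hqu], ?_⟩
  rw [dot_delta_sub_delta]
  have hpair : ∀ p ∈ e ×ˢ e, ∀ᶠ t in 𝓝[>] (0 : ℝ),
      (u - t • v) p.1 - (u - t • v) p.2 ≤ osc e u - t * (v q.1 - v q.2) := by
    intro p hp
    obtain ⟨hp₁, hp₂⟩ := mem_product.1 hp
    rcases (sub_le_osc hp₁ hp₂ u).eq_or_lt with hpu | hpu
    · filter_upwards [self_mem_nhdsWithin] with t (ht : 0 < t)
      have := hq p (by simp [P, hp₁, hp₂, hpu])
      simp only [Pi.sub_apply, Pi.smul_apply, smul_eq_mul]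
      nlinarith
    · refine eventually_nhdsWithin_of_eventually_nhds ?_
      exact (ContinuousAt.eventually_lt (by fun_prop) (by fun_prop) (by simpa using hpu)).mono
        fun t ht => ht.le
  filter_upwards [(eventually_all_finset _).2 hpair] with t ht
  exact osc_le he fun x hx y hy => ht (x, y) (mem_product.2 ⟨hx, hy⟩)

lemma exists_dotProduct_separation {ι : Type*} [Fintype ι] [DecidableEq ι] {K : Set (ι → ℝ)}
    (hconv : Convex ℝ K) (hclosed : IsClosed K) {p : ι → ℝ} (hp : p ∉ K) :
    ∃ v : ι → ℝ, ∃ s, p ⬝ᵥ v < s ∧ ∀ y ∈ K, s < y ⬝ᵥ v := by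
  obtain ⟨φ, s, hφp, hφK⟩ := geometric_hahn_banach_point_closed hconv hclosed hp
  have hφ : ∀ y, φ y = y ⬝ᵥ fun i => φ fun j => if i = j then 1 else 0 := fun y =>
    φ.toLinearMap.pi_apply_eq_sum_univ y
  exact ⟨_, s, hφ p ▸ hφp, fun y hy => hφ y ▸ hφK y hy⟩

lemma exists_lt_of_eventually_le {φ : ℝ → ℝ} {c a B : ℝ} (ha : a < 0)
    (h : ∀ᶠ t in 𝓝[>] (0 : ℝ), φ t ≤ c + t * a + t ^ 2 * B) : ∃ t, φ t < c := by
  have hB : ∀ᶠ t in 𝓝[>] (0 : ℝ), t * B < -a := by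
    have : Tendsto (fun t : ℝ => t * B) (𝓝[>] 0) (𝓝 0) := by
      simpa using ((continuous_mul_const B).tendsto 0).mono_left nhdsWithin_le_nhds
    exact this.eventually_lt_const (by linarith)
  obtain ⟨t, ht, htB, ht0⟩ := (h.and (hB.and self_mem_nhdsWithin)).exists
  exact ⟨t, by nlinarith⟩

end Optimality

section Resolvent

variable {H : Hypergraph V}

def edgeEnergy (H : Hypergraph V) (g : V → ℝ) : ℝ :=
  ∑ e ∈ H.E, H.w e * osc e (Dinv H g) ^ 2 / 2

-- A minimiser `g` of this functional solves `f ∈ g + λ 𝓛(g)`.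
def resolventEnergy (H : Hypergraph V) (l : ℝ) (f g : V → ℝ) : ℝ :=
  inn H (g - f) (g - f) / 2 + l * edgeEnergy H g

lemma edgeEnergy_nonneg (H : Hypergraph V) (g : V → ℝ) : 0 ≤ edgeEnergy H g :=
  sum_nonneg fun e he => by have := H.w_pos e he; positivity

lemma continuous_resolventEnergy (H : Hypergraph V) (l : ℝ) (f : V → ℝ) :
    Continuous (resolventEnergy H l f) := by
  unfold resolventEnergy edgeEnergy inn Dinv
  fun_prop

lemma exists_forall_resolventEnergy_le (hdeg : ∀ z, 0 < deg H z) {l : ℝ} (hl : 0 ≤ l)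
    (f : V → ℝ) : ∃ g₀, ∀ g, resolventEnergy H l f g₀ ≤ resolventEnergy H l f g := by
  set F := resolventEnergy H l f
  have hFf : 0 ≤ F f := by
    simpa [F, resolventEnergy, inn] using mul_nonneg hl (edgeEnergy_nonneg H f)
  set R := √(2 * vol H * F f)
  refine (continuous_resolventEnergy H l f).exists_forall_le' f
    (mem_cocompact.2 ⟨Metric.closedBall f R, isCompact_closedBall f R, fun g hg => ?_⟩)
  obtain ⟨z, hz⟩ : ∃ z, R < |g z - f z| := by
    by_contra! hfar
    exact hg ((dist_pi_le_iff (Real.sqrt_nonneg _)).2 fun z =>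
      (Real.dist_eq _ _).trans_le (hfar z))
  have hR : 2 * deg H z * F f ≤ (g z - f z) ^ 2 := by
    have hvol : deg H z ≤ vol H :=
      single_le_sum (fun z _ => (hdeg z).le) (mem_univ z)
    have : R ^ 2 ≤ |g z - f z| ^ 2 := pow_le_pow_left₀ (Real.sqrt_nonneg _) hz.le 2
    rw [Real.sq_sqrt (by nlinarith [(hdeg z).le]), sq_abs] at this
    nlinarith
  have hinn : (g z - f z) ^ 2 / deg H z ≤ inn H (g - f) (g - f) := by
    simpa [sq, inn] using single_le_sum (f := fun z => (g - f) z * (g - f) z / deg H z)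
      (fun z _ => div_nonneg (mul_self_nonneg _) (hdeg z).le) (mem_univ z)
  have hedge := mul_nonneg hl (edgeEnergy_nonneg H g)
  have : 2 * F f ≤ (g z - f z) ^ 2 / deg H z := by
    rw [le_div_iff₀ (hdeg z)]
    linarith
  change F f ≤ inn H (g - f) (g - f) / 2 + l * edgeEnergy H g
  linarith

lemma inn_sub_smul_self (hdeg : ∀ z, 0 < deg H z) (a v : V → ℝ) (t : ℝ) :
    inn H (a - t • fun z => deg H z * v z) (a - t • fun z => deg H z * v z) =
      inn H a a - 2 * t * dot a v + t ^ 2 * ∑ z, deg H z * v z ^ 2 := by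
  simp only [inn, dot, mul_sum, ← sum_sub_distrib, ← sum_add_distrib]
  refine sum_congr rfl fun z _ => ?_
  have := (hdeg z).ne'
  simp only [Pi.sub_apply, Pi.smul_apply, smul_eq_mul]
  field_simp
  ring

lemma edgeEnergy_le_of_osc_le {g g' : V → ℝ} {t : ℝ} {c : Finset V → ℝ}
    (h : ∀ e ∈ H.E, osc e (Dinv H g') ≤ osc e (Dinv H g) - t * c e) :
    edgeEnergy H g' ≤ edgeEnergy H g - t * ∑ e ∈ H.E, H.w e * osc e (Dinv H g) * c e +
      t ^ 2 * ∑ e ∈ H.E, H.w e * c e ^ 2 / 2 := by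
  simp only [edgeEnergy, mul_sum, ← sum_sub_distrib, ← sum_add_distrib]
  refine sum_le_sum fun e he => ?_
  have hsq : osc e (Dinv H g') ^ 2 ≤ (osc e (Dinv H g) - t * c e) ^ 2 :=
    pow_le_pow_left₀ (osc_nonneg (H.e_nonempty e he) _) (h e he) 2
  nlinarith [H.w_pos e he]

lemma exists_mem_NL_of_isMin (hdeg : ∀ z, 0 < deg H z) {l : ℝ} (hl : 0 < l) {f g₀ : V → ℝ}
    (hmin : ∀ g, resolventEnergy H l f g₀ ≤ resolventEnergy H l f g) :
    ∃ h ∈ NL H g₀, f = g₀ + l • h := by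
  set u := Dinv H g₀
  suffices hK : f - g₀ ∈ l • Lap H u by
    obtain ⟨h, hh, hfg⟩ := Set.mem_smul_set.1 hK
    exact ⟨h, hh, by rw [hfg]; abel⟩
  by_contra hK
  obtain ⟨v, s, hfv, hKv⟩ := exists_dotProduct_separation ((convex_Lap H u).smul l)
    ((isCompact_Lap H u).smul l).isClosed hK
  have hface : ∀ e, ∃ b : V → ℝ, e ∈ H.E → b ∈ Bp e ∧ dot b u = osc e u ∧
      ∀ᶠ t in 𝓝[>] (0 : ℝ), osc e (u - t • v) ≤ osc e u - t * dot b v := by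
    intro e
    by_cases he : e ∈ H.E
    · obtain ⟨b, hb⟩ := exists_mem_Bp_eventually_osc_sub_smul_le (H.e_nonempty e he) u v
      exact ⟨b, fun _ => hb⟩
    · exact ⟨0, fun h => absurd h he⟩
  choose b hb using hface
  set y₀ := ∑ e ∈ H.E, (H.w e * osc e u) • b e
  have hy₀ : y₀ ∈ Lap H u := mem_Lap_iff.2 ⟨b, fun e he => ⟨(hb e he).1, (hb e he).2.1⟩, rfl⟩
  have hsy : s < (l • y₀) ⬝ᵥ v := hKv _ (Set.smul_mem_smul_set hy₀)
  have hy₀v : (l • y₀) ⬝ᵥ v = l * ∑ e ∈ H.E, H.w e * osc e u * dot (b e) v := by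
    simp only [y₀, smul_dotProduct, sum_dotProduct, smul_eq_mul, dot_eq_dotProduct, mul_assoc]
  set w : V → ℝ := fun z => deg H z * v z
  have hDinv : ∀ t : ℝ, Dinv H (g₀ - t • w) = u - t • v := fun t => by
    ext z
    simp [u, w, Dinv, (hdeg z).ne', sub_div, mul_div_assoc]
  have hdescent : ∀ᶠ t in 𝓝[>] (0 : ℝ), resolventEnergy H l f (g₀ - t • w) ≤
      resolventEnergy H l f g₀ + t * ((f - g₀) ⬝ᵥ v - (l • y₀) ⬝ᵥ v) +
        t ^ 2 * ((∑ z, deg H z * v z ^ 2) / 2 + l * ∑ e ∈ H.E, H.w e * dot (b e) v ^ 2 / 2) := by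
    filter_upwards [(eventually_all_finset _).2 fun e he => (hb e he).2.2] with t ht
    have hedge := edgeEnergy_le_of_osc_le (H := H) (g := g₀) (g' := g₀ - t • w)
      (c := fun e => dot (b e) v) fun e he => by rw [hDinv]; exact ht e he
    have hquad := inn_sub_smul_self hdeg (g₀ - f) v t
    rw [show g₀ - f - t • w = g₀ - t • w - f by abel] at hquad
    have hfg : (f - g₀) ⬝ᵥ v = -dot (g₀ - f) v := by
      rw [dot_eq_dotProduct, ← neg_dotProduct, neg_sub]
    simp only [resolventEnergy, hquad, hy₀v, hfg]
    nlinarith [mul_le_mul_of_nonneg_left hedge hl.le]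
  obtain ⟨t, ht⟩ := exists_lt_of_eventually_le (sub_neg.2 (hfv.trans hsy)) hdescent
  exact (hmin _).not_gt ht

lemma resolvent_spec (hdeg : ∀ z, 0 < deg H z) {l : ℝ} (hl : 0 < l) (f : V → ℝ) :
    ∃ h ∈ NL H (Resolvent H l f), f = Resolvent H l f + l • h := by
  obtain ⟨g₀, hg₀⟩ := exists_forall_resolventEnergy_le hdeg hl.le f
  exact Classical.epsilon_spec (p := fun g => ∃ h ∈ NL H g, f = g + l • h)
    ⟨g₀, exists_mem_NL_of_isMin hdeg hl hg₀⟩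

end Resolvent

section Curvature

variable {H : Hypergraph V}

lemma abs_inn_resolvent_sub_le (hdeg : ∀ z, 0 < deg H z) {l : ℝ} (hl : 0 < l) (hl2 : l < 1 / 2)
    {f : V → ℝ} (hf : f ∈ Lip1 H) (x y : V) :
    |inn H (Resolvent H l f) (delta x - delta y) - inn H f (delta x - delta y)| ≤
      2 * l / (1 - 2 * l) := by
  obtain ⟨h, hh, hfg⟩ := resolvent_spec hdeg hl f
  set u := Dinv H (Resolvent H l f)
  have hfu : ∀ z, Dinv H f z = u z + l * Dinv H h z := fun z => by
    rw [hfg]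
    simp [u, Dinv, add_div, mul_div_assoc]
  have hh_le : ∀ C, (∀ e ∈ H.E, osc e u ≤ C) → ∀ z, |Dinv H h z| ≤ C := fun C hC z => by
    rw [Dinv, abs_div, abs_of_pos (hdeg z), div_le_iff₀ (hdeg z)]
    exact abs_apply_le_of_mem_Lap hh hC z
  -- on an edge, `u = D⁻¹f - λ D⁻¹h` varies by at most `d + 2λC ≤ 1 + 2λC`
  have hosc : ∀ C, (∀ e ∈ H.E, osc e u ≤ C) → ∀ e ∈ H.E, osc e u ≤ 1 + 2 * l * C :=
    fun C hC e he => osc_le (H.e_nonempty e he) fun p hp q hq => by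
      have hfpq := hf p q
      rw [inn_delta_sub_delta, hfu, hfu] at hfpq
      have := gdist_le_one_of_mem he hp hq
      have := abs_le.1 (hh_le C hC p)
      have := abs_le.1 (hh_le C hC q)
      nlinarith
  obtain ⟨C, hC, hCle⟩ : ∃ C, (∀ e ∈ H.E, osc e u ≤ C) ∧ C * (1 - 2 * l) ≤ 1 := by
    rcases H.E.eq_empty_or_nonempty with hE | hE
    · exact ⟨0, by simp [hE], by simp⟩
    obtain ⟨e₀, he₀, hmax⟩ := H.E.exists_max_image (fun e => osc e u) hE
    exact ⟨osc e₀ u, hmax, by nlinarith [hosc _ hmax e₀ he₀]⟩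
  rw [inn_delta_sub_delta, inn_delta_sub_delta, hfu x, hfu y]
  calc |u x - u y - (u x + l * Dinv H h x - (u y + l * Dinv H h y))|
      = l * |Dinv H h x - Dinv H h y| := by
        rw [show u x - u y - (u x + l * Dinv H h x - (u y + l * Dinv H h y)) =
          -(l * (Dinv H h x - Dinv H h y)) by ring, abs_neg, abs_mul, abs_of_pos hl]
    _ ≤ l * (2 * C) := by
        have := abs_sub (Dinv H h x) (Dinv H h y)
        gcongr
        linarith [hh_le C hC x, hh_le C hC y]
    _ ≤ 2 * l / (1 - 2 * l) := by
        rw [le_div_iff₀ (by linarith)]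
        nlinarith

lemma le_KD (hconn : Connected H) (hdeg : ∀ z, 0 < deg H z) {l : ℝ} (hl : 0 < l)
    (hl2 : l < 1 / 2) (x y : V) : gdist H x y - 2 * l / (1 - 2 * l) ≤ KD H l x y := by
  have hbdd : BddAbove {r | ∃ f ∈ Lip1 H, r = inn H (Resolvent H l f) (delta x - delta y)} := by
    refine ⟨gdist H x y + 2 * l / (1 - 2 * l), ?_⟩
    rintro _ ⟨f, hf, rfl⟩
    linarith [(abs_le.1 (abs_inn_resolvent_sub_le hdeg hl hl2 hf x y)).2, hf x y]
  set f₀ : V → ℝ := fun z => -(deg H z * gdist H x z)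
  have hf₀ : ∀ z, Dinv H f₀ z = -gdist H x z := fun z => by
    simp only [f₀, Dinv, neg_div, mul_div_cancel_left₀ _ (hdeg z).ne']
  have hf₀L : f₀ ∈ Lip1 H := fun p q => by
    rw [inn_delta_sub_delta, hf₀, hf₀]
    linarith [gdist_triangle hconn x p q]
  have hval : inn H f₀ (delta x - delta y) = gdist H x y := by
    rw [inn_delta_sub_delta, hf₀, hf₀, gdist_self]
    ring
  have := (abs_le.1 (abs_inn_resolvent_sub_le hdeg hl hl2 hf₀L x y)).1
  exact le_trans (by linarith) (le_csSup hbdd ⟨f₀, hf₀L, rfl⟩)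

lemma kappa_le (hconn : Connected H) (hdeg : ∀ z, 0 < deg H z) {x y : V} (hxy : x ≠ y) {l : ℝ}
    (hl : 0 < l) (hl2 : l < 1 / 2) :
    kappa H l x y ≤ 2 * l / (1 - 2 * l) / gdist H x y := by
  have hd := one_le_gdist hconn hxy
  rw [kappa, sub_le_iff_le_add, ← add_div, le_div_iff₀ (by linarith), one_mul]
  linarith [le_KD hconn hdeg hl hl2 x y]

lemma kappaUpper_le (hconn : Connected H) (hdeg : ∀ z, 0 < deg H z) {x y : V} (hxy : x ≠ y) :
    kappaUpper H x y ≤ ((2 / gdist H x y : ℝ) : EReal) := by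
  set d := gdist H x y
  have hd : 0 < d := one_pos.trans_le (one_le_gdist hconn hxy)
  have hlim : Tendsto (fun l : ℝ => ((2 / ((1 - 2 * l) * d) : ℝ) : EReal)) (𝓝[>] 0)
      (𝓝 ((2 / d : ℝ) : EReal)) := by
    have : ContinuousAt (fun l : ℝ => 2 / ((1 - 2 * l) * d)) 0 :=
      continuousAt_const.div (by fun_prop) (by simp [hd.ne'])
    simpa [Function.comp_def] using
      (continuous_coe_real_ereal.continuousAt.comp this).tendsto.mono_left nhdsWithin_le_nhds
  rw [kappaUpper, ← hlim.limsup_eq]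
  refine limsup_le_limsup ?_
  filter_upwards [Ioo_mem_nhdsGT (by norm_num : (0 : ℝ) < 1 / 2)] with l ⟨hl, hl2⟩
  have h2l : 0 < 1 - 2 * l := by linarith
  rw [EReal.coe_le_coe_iff, div_le_iff₀ hl]
  calc kappa H l x y ≤ 2 * l / (1 - 2 * l) / d := kappa_le hconn hdeg hxy hl hl2
    _ = 2 / ((1 - 2 * l) * d) * l := by field_simp

end Curvature

theorem stmt18_general (H : Hypergraph V) (hconn : Connected H)
    (hdeg : ∀ x : V, 0 < deg H x)
    (k0 : ℝ) (hk0 : 0 < k0)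
    (hcurv : ∀ x y : V, x ≠ y → (k0 : EReal) ≤ kappaUpper H x y) :
    hdiam H ≤ 2 / k0 := by
  have hdist : ∀ x y : V, gdist H x y ≤ 2 / k0 := by
    intro x y
    rcases eq_or_ne x y with rfl | hxy
    · rw [gdist_self]
      positivity
    have hd := one_le_gdist hconn hxy
    have hk : k0 ≤ 2 / gdist H x y :=
      EReal.coe_le_coe_iff.1 ((hcurv x y hxy).trans (kappaUpper_le hconn hdeg hxy))
    rwa [le_div_iff₀ (by linarith), mul_comm, ← le_div_iff₀ hk0] at hk
  -- `hdiam` is a supremum in `ℕ`, hence at most `⌊2 / k0⌋₊`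
  exact (Nat.cast_le.2 (Finset.sup_le fun p _ => Nat.le_floor (hdist p.1 p.2))).trans
    (Nat.floor_le (by positivity))

/-- Bonnet–Myers: if `κ̄(x,y) ≥ κ₀ > 0` for all `x ≠ y`, then
`diam(H) ≤ 2/κ₀`. -/
theorem stmt18 [Nonempty V] (H : Hypergraph V) (hconn : Connected H)
    (hdeg : ∀ x : V, 0 < deg H x) (hV : 2 ≤ Fintype.card V)
    (k0 : ℝ) (hk0 : 0 < k0)
    (hcurv : ∀ x y : V, x ≠ y → (k0 : EReal) ≤ kappaUpper H x y) :
    hdiam H ≤ 2 / k0 :=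
  stmt18_general H hconn hdeg k0 hk0 hcurv

end HypRicci
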